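/- arXiv:1111.0164 — 4 statements merged into one kernel-verified Lean document; each statement's English description precedes it below -/
import Mathlib

section
/- For any two formal pseudodifferential operators D₁, D₂ (with coefficients formal power series in x), the identity res_k ((e^{−kx} D₁)(D₂ e^{kx})) dk = res_∂ (D₂ D₁) holds, where the left side is the coefficient of k^{−1} of the product of the two formal Laurent series in k obtained by the right action of D₁ on e^{−kx} and the left action of D₂ on e^{kx}, and the right side is the ∂_x^{−1}-coefficient of D₂D₁. -/
/-!
STATEMENT 8: For any two formal pseudodifferential operators D₁, D₂,
res_k ((e^{−kx} D₁)(D₂ e^{kx})) dk = res_∂ (D₂ D₁).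

Pseudodifferential operators `(N, c)` represent `Σ c s ∂^{N-s}` with formal power
series coefficients in x.  The left action gives `D₂ e^{kx} = e^{kx} Σ_n a_n(x) kⁿ`
(a formal Laurent series in k, bounded above, represented by the same kind of pair),
and the right (formal adjoint, `f∂ = −∂f`) action gives
`e^{−kx} D₁ = e^{−kx} Σ_m (Σ_j (−1)^j gbin(m+j,j) a_{m+j}^{(j)}(x)) k^m`.
`res_k (·) dk` is the coefficient of `k^{−1}` and `res_∂` the coefficient of `∂^{−1}`.
-/

noncomputable section

def PsDO : Type := ℤ × (ℕ → PowerSeries ℂ)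

namespace PsDO

def gbin (n : ℤ) (j : ℕ) : ℂ :=
  (∏ i ∈ Finset.range j, ((n : ℂ) - (i : ℂ))) / (j.factorial : ℂ)

def coeffAt (A : PsDO) (n : ℤ) : PowerSeries ℂ :=
  if n ≤ A.1 then A.2 (A.1 - n).toNat else 0

def mul (A B : PsDO) : PsDO :=
  (A.1 + B.1, fun t => ∑ s ∈ Finset.range (t + 1), ∑ j ∈ Finset.range (t + 1 - s),
    A.2 s * PowerSeries.C (gbin (A.1 - s) j) *
      (PowerSeries.derivativeFun)^[j] (B.2 (t - s - j)))

/-- The symbol of the right (formal adjoint) action: `e^{−kx} D = e^{−kx}·(rightSym D)(x,k)`.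
The coefficient of `k^{N−t}` is `Σ_{s+j=t} (−1)^j gbin(N−s,j) (c s)^{(j)}`. -/
def rightSym (A : PsDO) : PsDO :=
  (A.1, fun t => ∑ j ∈ Finset.range (t + 1),
    PowerSeries.C ((-1 : ℂ) ^ j * gbin (A.1 - (t - j)) j) *
      (PowerSeries.derivativeFun)^[j] (A.2 (t - j)))

/-- Product of formal Laurent series in k (bounded above) with power series coefficients. -/
def smul (A B : PsDO) : PsDO :=
  (A.1 + B.1, fun t => ∑ s ∈ Finset.range (t + 1), A.2 s * B.2 (t - s))

end PsDO

/-!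
Only the coefficient `t = N₁ + N₂ + 1` of both symbols matters.  After reflecting the outer
index `s ↦ t - s` of the operator product, both sides are the same double sum of terms
`b_s · (a_{t-s-j})^{(j)}`, and the binomial factors agree by upper negation,
`(-1)^j gbin(m, j) = gbin(j - 1 - m, j)`.
-/

namespace PsDO

theorem neg_one_pow_mul_gbin (m : ℤ) (j : ℕ) :
    (-1 : ℂ) ^ j * gbin m j = gbin ((j : ℤ) - 1 - m) j := by
  unfold gbin
  rw [mul_div_assoc']
  congr 1
  rw [← Finset.prod_range_reflect (fun i => ((((j : ℤ) - 1 - m : ℤ) : ℂ) - (i : ℕ)))]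
  have hfactor : ∀ i ∈ Finset.range j,
      ((((j : ℤ) - 1 - m : ℤ) : ℂ) - ((j - 1 - i : ℕ) : ℂ)) = -1 * ((m : ℂ) - i) := by
    intro i hi
    have hij : i < j := Finset.mem_range.mp hi
    have hcast : ((j - 1 - i : ℕ) : ℤ) = (j : ℤ) - 1 - i := by omega
    rw [show ((j - 1 - i : ℕ) : ℂ) = (((j - 1 - i : ℕ) : ℤ) : ℂ) by norm_cast, hcast]
    push_cast
    ring
  rw [Finset.prod_congr rfl hfactor, Finset.prod_mul_distrib, Finset.prod_const,
    Finset.card_range]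

theorem smul_rightSym_snd_eq_mul_snd (A B : PsDO) (t : ℕ) (ht : (t : ℤ) = A.1 + B.1 + 1) :
    (smul (rightSym A) B).2 t = (mul B A).2 t := by
  obtain ⟨M, a⟩ := A
  obtain ⟨N, b⟩ := B
  simp only [smul, mul, rightSym] at ht ⊢
  rw [← Finset.sum_range_reflect (fun s => ∑ j ∈ Finset.range (t + 1 - s),
    b s * PowerSeries.C (gbin (N - s) j) * (PowerSeries.derivativeFun)^[j] (a (t - s - j)))]
  refine Finset.sum_congr rfl fun s hs => ?_
  have hst : s ≤ t := Nat.lt_succ_iff.mp (Finset.mem_range.mp hs)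
  rw [Nat.add_sub_cancel, show t + 1 - (t - s) = s + 1 by omega, Nat.sub_sub_self hst,
    Finset.sum_mul]
  refine Finset.sum_congr rfl fun j _ => ?_
  have hdeg : N - ((t - s : ℕ) : ℤ) = (j : ℤ) - 1 - (M - ((s : ℤ) - j)) := by omega
  rw [neg_one_pow_mul_gbin, ← hdeg]
  ring

end PsDO

open PsDO

/-- Here `D₁ = A`, `D₂ = B`; `B` itself is the symbol of `D₂ e^{kx}`. -/
theorem stmt8 (A B : PsDO) :
    coeffAt (smul (rightSym A) B) (-1) = coeffAt (mul B A) (-1) := by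
  have hdeg : (smul (rightSym A) B).1 = (mul B A).1 := add_comm A.1 B.1
  unfold coeffAt
  rw [hdeg]
  split_ifs with h
  · exact smul_rightSym_snd_eq_mul_snd A B _ (by simp only [mul] at h ⊢; omega)
  · rfl
end
end

section
/- Let ψ = e^{kx}(1 + Σ ξ_s(x) k^{−s}) be a wave solution of Lψ = kψ for L = ∂ + Σ v_s ∂^{−s}, and ψ⁺ = e^{−kx}(1 + Σ ξ⁺_s(x)k^{−s}) the dual wave function (ψ⁺ = e^{−kx}Φ^{−1}). Then res_k (ψ⁺ (∂_xⁿ ψ)) dk = 0 for all n ≥ 0. -/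
/-!
For pseudodifferential operators `D₁, D₂` the `k⁻¹`-coefficient of `(e^{-kx} D₁)(D₂ e^{kx})`,
i.e. of the right symbol of `D₁` times the left symbol of `D₂`, equals the `∂⁻¹`-coefficient of
`D₂ ∘ D₁`: both are sums over triples `s + j + r` that agree term by term thanks to the reflection
`binom(j - 1 - n, j) = (-1)^j binom(n, j)`. For `D₁ = Φ⁻¹` and `D₂ = ∂ⁿ ∘ Φ` the composite is `∂ⁿ`,
which has no `∂⁻¹` term. Only associativity with `∂` on the left is needed to see `D₂ ∘ D₁ = ∂ⁿ`,
and that is the Leibniz rule.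

Pseudodifferential operators `(N, c)` represent `Σ c s ∂^{N-s}`; `∂ⁿψ = (∂ⁿ∘Φ)e^{kx}`,
`ψ⁺(∂ⁿψ)` is the product of the right-adjoint symbol of Φ^{−1} and the left symbol of
∂ⁿ∘Φ, and `res_k (·) dk` is its `k^{−1}` coefficient.
-/

noncomputable section

namespace PsDO

def one : PsDO := (0, fun s => if s = 0 then 1 else 0)

def Dx : PsDO := (1, fun s => if s = 0 then 1 else 0)

def pow (A : PsDO) (n : ℕ) : PsDO := (mul A)^[n] one

end PsDO

open PsDO

namespace PsDO

open Finset PowerSeries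

lemma gbin_eq_choose (n : ℤ) (j : ℕ) : gbin n j = Ring.choose (n : ℂ) j := by
  rw [Ring.choose_eq_smul, ← Polynomial.aeval_eq_smeval, Polynomial.aeval_def,
    Polynomial.eval₂_eq_eval_map, descPochhammer_map, descPochhammer_eval_eq_prod_range,
    gbin, smul_eq_mul, div_eq_inv_mul]

lemma gbin_reflect (n : ℤ) (j : ℕ) : gbin (j - 1 - n) j = (-1) ^ j * gbin n j := by
  have h := Ring.choose_neg ((n : ℂ) - j + 1) j
  rw [show -((n : ℂ) - j + 1) = ((j - 1 - n : ℤ) : ℂ) by push_cast; ring,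
    show (n : ℂ) - j + 1 + j - 1 = n by ring] at h
  rw [gbin_eq_choose, gbin_eq_choose, h, Int.negOnePow_def, Units.smul_def, zsmul_eq_mul]
  simp

set_option linter.deprecated false in
lemma derivativeFun_eq_derivative : (derivativeFun : ℂ⟦X⟧ → ℂ⟦X⟧) = d⁄dX ℂ := rfl

lemma derivative_C_mul (c : ℂ) (f : ℂ⟦X⟧) : d⁄dX ℂ (C c * f) = C c * d⁄dX ℂ f := by
  simp [Derivation.leibniz, smul_eq_mul]

def dpow (m : ℤ) : PsDO := (m, fun s => if s = 0 then 1 else 0)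

/-- For `B = (N, f)`, `∂^m ∘ B = Σ_u dpowMulCoeff m f u ∂^(m + N - u)`. -/
def dpowMulCoeff (m : ℤ) (f : ℕ → ℂ⟦X⟧) (u : ℕ) : ℂ⟦X⟧ :=
  ∑ p ∈ antidiagonal u, C (gbin m p.1) * (d⁄dX ℂ)^[p.1] (f p.2)

lemma dpowMulCoeff_zero_right (m : ℤ) (f : ℕ → ℂ⟦X⟧) : dpowMulCoeff m f 0 = f 0 := by
  simp [dpowMulCoeff, gbin_eq_choose]

lemma dpowMulCoeff_zero_left (f : ℕ → ℂ⟦X⟧) (u : ℕ) : dpowMulCoeff 0 f u = f u := by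
  rw [dpowMulCoeff, sum_eq_single_of_mem (0, u) (by simp)]
  · simp [gbin_eq_choose]
  · rintro ⟨j, r⟩ hp hne
    have hj : j ≠ 0 := by rintro rfl; simp_all
    simp [gbin_eq_choose, Ring.choose_zero_ite, hj]

lemma dpowMulCoeff_add_one_succ (m : ℤ) (f : ℕ → ℂ⟦X⟧) (u : ℕ) :
    dpowMulCoeff (m + 1) f (u + 1) = dpowMulCoeff m f (u + 1) + d⁄dX ℂ (dpowMulCoeff m f u) := by
  simp only [dpowMulCoeff, Nat.sum_antidiagonal_succ, map_sum, derivative_C_mul, gbin_eq_choose]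
  push_cast
  simp only [Ring.choose_succ_succ, Ring.choose_zero_right, map_add, add_mul, sum_add_distrib,
    Function.iterate_succ_apply']
  ring

lemma snd_mul (A B : PsDO) (t : ℕ) :
    (mul A B).2 t = ∑ p ∈ antidiagonal t, A.2 p.1 * dpowMulCoeff (A.1 - p.1) B.2 p.2 := by
  rw [Nat.sum_antidiagonal_eq_sum_range_succ (fun s q => A.2 s * dpowMulCoeff (A.1 - s) B.2 q)]
  simp only [mul, derivativeFun_eq_derivative]
  refine sum_congr rfl fun s hs => ?_
  rw [dpowMulCoeff, Nat.sum_antidiagonal_eq_sum_range_succ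
    (fun j r => C (gbin (A.1 - s) j) * (⇑(d⁄dX ℂ))^[j] (B.2 r)), mul_sum,
    show t + 1 - s = t - s + 1 by grind]
  simp only [mul_assoc]

lemma snd_dpow_mul (m : ℤ) (A : PsDO) (t : ℕ) : (mul (dpow m) A).2 t = dpowMulCoeff m A.2 t := by
  rw [snd_mul, sum_eq_single_of_mem (0, t) (by simp)]
  · simp [dpow]
  · rintro ⟨s, q⟩ hp hne
    have hs : s ≠ 0 := by rintro rfl; simp_all
    simp [dpow, hs]

protected lemma one_mul (A : PsDO) : mul one A = A :=
  Prod.ext (zero_add A.1) (funext fun t => (snd_dpow_mul 0 A t).trans (dpowMulCoeff_zero_left _ t))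

lemma snd_Dx_mul_zero (A : PsDO) : (mul Dx A).2 0 = A.2 0 :=
  (snd_dpow_mul 1 A 0).trans (dpowMulCoeff_zero_right _ _)

lemma snd_Dx_mul_succ (A : PsDO) (t : ℕ) :
    (mul Dx A).2 (t + 1) = A.2 (t + 1) + d⁄dX ℂ (A.2 t) := by
  rw [show Dx = dpow (0 + 1) from rfl, snd_dpow_mul, dpowMulCoeff_add_one_succ,
    dpowMulCoeff_zero_left, dpowMulCoeff_zero_left]

lemma Dx_mul_dpow (m : ℤ) : mul Dx (dpow m) = dpow (m + 1) := by
  refine Prod.ext (add_comm 1 m) (funext fun t => ?_)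
  cases t with
  | zero => exact snd_Dx_mul_zero _
  | succ t =>
    rw [snd_Dx_mul_succ]
    simp [dpow, apply_ite (d⁄dX ℂ)]

lemma pow_Dx (n : ℕ) : pow Dx n = dpow n := by
  induction n with
  | zero => rfl
  | succ n ih =>
    rw [pow, Function.iterate_succ_apply', ← pow, ih, Dx_mul_dpow]
    push_cast
    rfl

lemma Dx_mul_assoc (A B : PsDO) : mul (mul Dx A) B = mul Dx (mul A B) := by
  refine Prod.ext (add_assoc 1 A.1 B.1) (funext fun t => ?_)
  cases t with
  | zero => simp [snd_mul, dpowMulCoeff_zero_right, mul_assoc]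
  | succ t =>
    have hL : (mul (mul Dx A) B).2 (t + 1)
        = ∑ p ∈ antidiagonal (t + 1), A.2 p.1 * dpowMulCoeff (A.1 + 1 - p.1) B.2 p.2
          + ∑ p ∈ antidiagonal t, d⁄dX ℂ (A.2 p.1) * dpowMulCoeff (A.1 - p.1) B.2 p.2 := by
      rw [snd_mul, Nat.sum_antidiagonal_succ, Nat.sum_antidiagonal_succ
        (f := fun p => A.2 p.1 * dpowMulCoeff (A.1 + 1 - p.1) B.2 p.2)]
      have hord : (mul Dx A).1 = A.1 + 1 := add_comm 1 A.1
      have drop : ∀ s : ℕ, A.1 + 1 - ((s + 1 : ℕ) : ℤ) = A.1 - s := fun s => by push_cast; ring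
      simp only [snd_Dx_mul_zero, snd_Dx_mul_succ, add_mul, sum_add_distrib, hord, drop, add_assoc]
    have hX : ∑ p ∈ antidiagonal (t + 1), A.2 p.1 * dpowMulCoeff (A.1 + 1 - p.1) B.2 p.2
        = (mul A B).2 (t + 1)
          + ∑ p ∈ antidiagonal t, A.2 p.1 * d⁄dX ℂ (dpowMulCoeff (A.1 - p.1) B.2 p.2) := by
      have shift : ∀ s : ℕ, A.1 + 1 - (s : ℤ) = A.1 - s + 1 := fun s => by ring
      rw [snd_mul, Nat.sum_antidiagonal_succ', Nat.sum_antidiagonal_succ']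
      simp only [dpowMulCoeff_zero_right, shift, dpowMulCoeff_add_one_succ, mul_add,
        sum_add_distrib]
      abel
    have hR : (mul Dx (mul A B)).2 (t + 1)
        = (mul A B).2 (t + 1)
          + ∑ p ∈ antidiagonal t, (A.2 p.1 * d⁄dX ℂ (dpowMulCoeff (A.1 - p.1) B.2 p.2)
            + dpowMulCoeff (A.1 - p.1) B.2 p.2 * d⁄dX ℂ (A.2 p.1)) := by
      simp only [snd_Dx_mul_succ, snd_mul A B t, map_sum, Derivation.leibniz, smul_eq_mul]
    rw [hL, hX, hR, sum_add_distrib, add_assoc]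
    simp_rw [mul_comm (d⁄dX ℂ _)]

lemma iterate_Dx_mul_mul (n : ℕ) (A B : PsDO) :
    mul ((mul Dx)^[n] A) B = (mul Dx)^[n] (mul A B) := by
  induction n with
  | zero => rfl
  | succ n ih => simp only [Function.iterate_succ_apply', Dx_mul_assoc, ih]

lemma pow_Dx_mul (n : ℕ) (A : PsDO) : mul (pow Dx n) A = (mul Dx)^[n] A := by
  rw [pow, iterate_Dx_mul_mul, PsDO.one_mul]

lemma ext_of_coeffAt {A B : PsDO} (h₁ : A.1 = B.1) (h : ∀ n, coeffAt A n = coeffAt B n) :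
    A = B := by
  refine Prod.ext h₁ (funext fun t => ?_)
  simpa [coeffAt, h₁] using h (B.1 - t)

lemma coeffAt_dpow (m n : ℤ) : coeffAt (dpow m) n = if n = m then 1 else 0 := by
  dsimp only [coeffAt, dpow]
  split_ifs <;> first | rfl | omega

lemma snd_rightSym (B : PsDO) (t : ℕ) :
    (rightSym B).2 t = ∑ p ∈ antidiagonal t,
      C ((-1 : ℂ) ^ p.1 * gbin (B.1 - p.2) p.1) * (d⁄dX ℂ)^[p.1] (B.2 p.2) := by
  rw [Nat.sum_antidiagonal_eq_sum_range_succ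
    (fun j r : ℕ => C ((-1 : ℂ) ^ j * gbin (B.1 - r) j) * (⇑(d⁄dX ℂ))^[j] (B.2 r))]
  simp only [rightSym, derivativeFun_eq_derivative]
  refine sum_congr rfl fun j hj => ?_
  rw [Nat.cast_sub (by simpa [Nat.lt_succ_iff] using hj)]

lemma snd_smul (A B : PsDO) (t : ℕ) :
    (smul A B).2 t = ∑ p ∈ antidiagonal t, A.2 p.1 * B.2 p.2 :=
  (Nat.sum_antidiagonal_eq_sum_range_succ (fun s r => A.2 s * B.2 r) t).symm

lemma snd_smul_rightSym (A B : PsDO) (T : ℕ) (hT : (T : ℤ) = A.1 + B.1 + 1) :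
    (smul (rightSym B) A).2 T = (mul A B).2 T := by
  rw [snd_smul, snd_mul, ← Nat.sum_antidiagonal_swap]
  refine sum_congr rfl fun p hp => ?_
  simp only [Prod.fst_swap, Prod.snd_swap, snd_rightSym, dpowMulCoeff, sum_mul, mul_sum]
  refine sum_congr rfl fun q hq => ?_
  rw [HasAntidiagonal.mem_antidiagonal] at hp hq
  rw [show A.1 - p.1 = q.1 - 1 - (B.1 - q.2) by omega, gbin_reflect, map_mul]
  ring

lemma coeffAt_smul_rightSym_neg_one (A B : PsDO) :
    coeffAt (smul (rightSym B) A) (-1) = coeffAt (mul A B) (-1) := by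
  have hord : (smul (rightSym B) A).1 = (mul A B).1 := add_comm B.1 A.1
  rw [coeffAt, coeffAt, hord]
  split_ifs with h
  · exact snd_smul_rightSym A B _ (by rw [Int.toNat_of_nonneg (by omega)]; exact sub_neg_eq_add _ 1)
  · rfl

end PsDO

theorem stmt10_general (Φ Ψ : PsDO)
    (hΦord : Φ.1 = 0)
    (hΨord : Ψ.1 = 0)
    (hinv₁ : ∀ n : ℤ, coeffAt (mul Φ Ψ) n = coeffAt one n) :
    ∀ n : ℕ, coeffAt (smul (rightSym Ψ) (mul (pow Dx n) Φ)) (-1) = 0 := by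
  intro n
  have hΦΨ : mul Φ Ψ = one := ext_of_coeffAt (by simp [mul, one, hΦord, hΨord]) hinv₁
  rw [coeffAt_smul_rightSym_neg_one, pow_Dx_mul, iterate_Dx_mul_mul, hΦΨ, ← pow, pow_Dx,
    coeffAt_dpow, if_neg (by omega)]

theorem stmt10 (L Φ Ψ : PsDO)
    (hLord : L.1 = 1) (hL0 : L.2 0 = 1) (hL1 : L.2 1 = 0)
    (hΦord : Φ.1 = 0) (hΦ0 : Φ.2 0 = 1)
    (hΨord : Ψ.1 = 0) (hΨ0 : Ψ.2 0 = 1)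
    (hinv₁ : ∀ n : ℤ, coeffAt (mul Φ Ψ) n = coeffAt one n)
    (hinv₂ : ∀ n : ℤ, coeffAt (mul Ψ Φ) n = coeffAt one n)
    (hwave : ∀ n : ℤ, coeffAt (mul L Φ) n = coeffAt (mul Φ Dx) n) :
    ∀ n : ℕ, coeffAt (smul (rightSym Ψ) (mul (pow Dx n) Φ)) (-1) = 0 :=
  stmt10_general Φ Ψ hΦord hΨord hinv₁
end
end

section
/- For any two formal pseudodifference operators D₁, D₂ in the shift operator T, the identity res_k ((k^{−x}D₁)(D₂ k^{x})) k^{−1} dk = res_T (D₂ D₁) holds. -/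
/-!
STATEMENT 13: For any two formal pseudodifference operators D₁, D₂ in the shift T,
res_k ((k^{−x}D₁)(D₂ k^{x})) k^{−1} dk = res_T (D₂ D₁).

Pseudodifference operators `(N, c)` represent `Σ c s T^{N−s}` with coefficients
functions of x; `T k^x = k·k^x`, so `D₂k^x = k^x Σ_n a_n(x) kⁿ` (left symbol = the
coefficients themselves), while the right action `(fT) = T^{−1}f` gives
`k^{−x}D₁ = k^{−x} Σ_n a_n(x−n) kⁿ`.  `res_k (·) k^{−1}dk` is the k⁰-coefficient of
the product Laurent series, and `res_T` the T⁰-coefficient.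
-/

noncomputable section

def PdO : Type := ℤ × (ℕ → (ℂ → ℂ))

namespace PdO

def coeffAt (A : PdO) (n : ℤ) : ℂ → ℂ :=
  if n ≤ A.1 then A.2 (A.1 - n).toNat else 0

def mul (A B : PdO) : PdO :=
  (A.1 + B.1, fun t x => ∑ s ∈ Finset.range (t + 1),
    A.2 s x * B.2 (t - s) (x + ((A.1 - s : ℤ) : ℂ)))

/-- Symbol of the right action: the coefficient of `k^{N−t}` in `k^{−x}D` is
`a_{N−t}(x − (N−t))`. -/
def rightSym (A : PdO) : PdO :=
  (A.1, fun t x => A.2 t (x - ((A.1 - t : ℤ) : ℂ)))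

/-- Product of formal Laurent series in k (bounded above) with function coefficients. -/
def smul (A B : PdO) : PdO :=
  (A.1 + B.1, fun t x => ∑ s ∈ Finset.range (t + 1), A.2 s x * B.2 (t - s) x)

def res (A : PdO) : ℂ → ℂ := coeffAt A 0

end PdO

open PdO

/-- Here `D₁ = A`, `D₂ = B`. -/
theorem stmt13 (A B : PdO) (x : ℂ) :
    coeffAt (smul (rightSym A) B) 0 x = res (mul B A) x := by
  unfold res coeffAt smul mul rightSym
  simp only [sub_zero]
  rw [add_comm B.1 A.1]
  split
  · next h =>
    simp only
    rw [← Finset.sum_range_reflect]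
    refine Finset.sum_congr rfl fun s hs => ?_
    simp only [Finset.mem_range, Nat.lt_succ_iff] at hs
    rw [Nat.succ_sub_one, Nat.sub_sub_self hs, mul_comm]
    congr 2
    have hT : ((A.1 + B.1).toNat : ℤ) = A.1 + B.1 := Int.toNat_of_nonneg h
    push_cast [Nat.cast_sub hs, hT]
    ring
  · rfl
end
end

section
/- Let ℒ = T + Σ_{s≥0} w_s T^{−s}, Φ = 1 + Σ_{s≥1} φ_s(x)T^{−s} its wave operator with ψ = Φk^x, and ψ⁺ = k^{−x}Φ^{−1}. Then the coefficients of the expansion ψ⁺ψ = 1 + Σ_{s≥1} J_s k^{−s} satisfy J_n = res_T ℒⁿ for all n ≥ 1. -/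
/-!
STATEMENT 14: Let ℒ = T + Σ_{s≥0} w_s T^{−s}, Φ = 1 + Σ_{s≥1} φ_s(x)T^{−s} its wave
operator with ψ = Φk^x, and ψ⁺ = k^{−x}Φ^{−1}.  Then the coefficients of
ψ⁺ψ = 1 + Σ_{s≥1} J_s k^{−s} satisfy J_n = res_T ℒⁿ for all n ≥ 1.

Pseudodifference operators `(N, c)` represent `Σ c s T^{N−s}`; `ψ⁺ψ` is the product
of the right symbol of Φ^{−1} (from (fT) = T^{−1}f) and the left symbol of Φ, and
ℒ = Φ ∘ T ∘ Φ^{−1}.  `res_T` is the T⁰-coefficient.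
-/

noncomputable section

namespace PdO

def one : PdO := (0, fun s => if s = 0 then (fun _ => 1) else 0)

def T : PdO := (1, fun s => if s = 0 then (fun _ => 1) else 0)

def pow (A : PdO) (n : ℕ) : PdO := (mul A)^[n] one

end PdO

/-!
Since `Φ` and `Ψ` are mutually inverse, `ℒⁿ = (Φ T Ψ)ⁿ = Φ Tⁿ Ψ`. Both sides of the claim are
then the same convolution `∑_{i+j=n} φ_i(x) ψ_j(x + j)` of the coefficients of `Φ` and
`Ψ = Φ⁻¹`: in the `T⁰`-coefficient of `Φ Tⁿ Ψ` the shift `x + j` comes from moving `T^{n-i}`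
past `ψ_j`, and in the `k^{-n}`-coefficient of `ψ⁺ψ` it comes from the right symbol of `Ψ`.
-/

open Finset

namespace PdO

instance : Mul PdO := ⟨mul⟩

instance : One PdO := ⟨one⟩

lemma fst_one : (1 : PdO).1 = 0 := rfl

lemma snd_one (s : ℕ) (x : ℂ) : (1 : PdO).2 s x = if s = 0 then 1 else 0 := by
  change one.2 s x = _
  simp only [one]
  split_ifs <;> rfl

lemma fst_mul (A B : PdO) : (A * B).1 = A.1 + B.1 := rfl

lemma snd_mul (A B : PdO) (t : ℕ) (x : ℂ) :
    (A * B).2 t x =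
      ∑ p ∈ antidiagonal t, A.2 p.1 x * B.2 p.2 (x + ((A.1 - p.1 : ℤ) : ℂ)) :=
  (Nat.sum_antidiagonal_eq_sum_range_succ
    (fun i j => A.2 i x * B.2 j (x + ((A.1 - i : ℤ) : ℂ))) t).symm

lemma snd_smul (A B : PdO) (t : ℕ) (x : ℂ) :
    (smul A B).2 t x = ∑ p ∈ antidiagonal t, A.2 p.1 x * B.2 p.2 x :=
  (Nat.sum_antidiagonal_eq_sum_range_succ (fun i j => A.2 i x * B.2 j x) t).symm

lemma snd_rightSym (A : PdO) (t : ℕ) (x : ℂ) :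
    (rightSym A).2 t x = A.2 t (x - ((A.1 - t : ℤ) : ℂ)) :=
  rfl

protected lemma mul_assoc (A B C : PdO) : A * B * C = A * (B * C) := by
  refine Prod.ext (add_assoc _ _ _) (funext₂ fun t x => ?_)
  simp only [snd_mul, fst_mul, sum_mul, mul_sum, sum_sigma']
  apply sum_nbij' (fun ⟨⟨_i, j⟩, ⟨k, l⟩⟩ ↦ ⟨(k, l + j), (l, j)⟩)
    (fun ⟨⟨i, _j⟩, ⟨k, l⟩⟩ ↦ ⟨(i + k, l), (i, k)⟩)
  all_goals
    rintro ⟨⟨_, _⟩, ⟨_, _⟩⟩ h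
    simp only [mem_sigma, HasAntidiagonal.mem_antidiagonal] at h
    obtain ⟨rfl, rfl⟩ := h
  · simp [add_assoc]
  · simp [add_assoc]
  · rfl
  · rfl
  · push_cast
    ring_nf

protected lemma one_mul (A : PdO) : 1 * A = A := by
  refine Prod.ext (zero_add _) (funext₂ fun t x => ?_)
  rw [snd_mul, Nat.sum_antidiagonal_eq_sum_range_succ_mk, sum_range_succ']
  simp [fst_one, snd_one]

protected lemma mul_one (A : PdO) : A * 1 = A := by
  refine Prod.ext (add_zero _) (funext₂ fun t x => ?_)
  rw [snd_mul, ← Nat.sum_antidiagonal_swap, Nat.sum_antidiagonal_eq_sum_range_succ_mk,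
    sum_range_succ']
  simp [snd_one]

instance : Monoid PdO where
  mul_assoc := PdO.mul_assoc
  one_mul := PdO.one_mul
  mul_one := PdO.mul_one

lemma pow_eq_pow (A : PdO) (n : ℕ) : pow A n = A ^ n := by
  induction n with
  | zero => rfl
  | succ n ih => rw [pow, Function.iterate_succ_apply', ← pow, ih, pow_succ']; rfl

-- `T` and `1` have the same coefficients, and those of a product do not see the order of
-- the right factor.
lemma snd_mul_T (A : PdO) : (A * T).2 = A.2 :=
  (congrArg Prod.snd (mul_one A) : (A * 1).2 = A.2)

lemma snd_mul_T_pow (A : PdO) (n : ℕ) : (A * T ^ n).2 = A.2 := by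
  induction n with
  | zero => rw [pow_zero, mul_one]
  | succ n ih => rw [pow_succ, ← mul_assoc, snd_mul_T, ih]

lemma fst_T_pow (n : ℕ) : (T ^ n).1 = n := by
  induction n with
  | zero => rfl
  | succ n ih => rw [pow_succ, fst_mul, ih, Nat.cast_succ]; rfl

lemma coeffAt_sub_natCast (A : PdO) (n : ℕ) : coeffAt A (A.1 - n) = A.2 n := by
  simp [coeffAt]

lemma mul_eq_one_of_coeffAt {A B : PdO} (hord : A.1 + B.1 = 0)
    (h : ∀ (n : ℤ) (x : ℂ), coeffAt (A * B) n x = coeffAt 1 n x) : A * B = 1 := by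
  have hfst : (A * B).1 = (1 : PdO).1 := hord.trans fst_one.symm
  refine Prod.ext hfst (funext₂ fun t x => ?_)
  have := h ((A * B).1 - t) x
  rwa [coeffAt_sub_natCast, hfst, coeffAt_sub_natCast] at this

lemma coeffAt_smul_rightSym_eq_res {A B : PdO} (hord : A.1 + B.1 = 0) (n : ℕ) (x : ℂ) :
    coeffAt (smul (rightSym B) A) (-n) x = res (A * T ^ n * B) x := by
  have hL : (smul (rightSym B) A).1 - n = -n := by
    change B.1 + A.1 - n = _
    rw [add_comm, hord, zero_sub]
  have hR : (A * T ^ n * B).1 - n = 0 := by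
    rw [fst_mul, fst_mul, fst_T_pow]
    omega
  rw [res, ← hL, ← hR, coeffAt_sub_natCast, coeffAt_sub_natCast, snd_mul, snd_mul_T_pow,
    fst_mul, fst_T_pow, ← Nat.sum_antidiagonal_swap, snd_smul]
  refine sum_congr rfl fun p hp => ?_
  rw [HasAntidiagonal.mem_antidiagonal] at hp
  have hshift : x - ((B.1 - p.1 : ℤ) : ℂ) = x + ((A.1 + n - p.2 : ℤ) : ℂ) := by
    rw [← hp, eq_neg_of_add_eq_zero_left hord]
    push_cast
    ring
  rw [snd_rightSym, Prod.fst_swap, Prod.snd_swap, hshift, mul_comm]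

end PdO

open PdO

theorem stmt14_general (Φ Ψ : PdO)
    (hΦord : Φ.1 = 0)
    (hΨord : Ψ.1 = 0)
    (hinv₁ : ∀ (n : ℤ) (x : ℂ), coeffAt (mul Φ Ψ) n x = coeffAt one n x)
    (hinv₂ : ∀ (n : ℤ) (x : ℂ), coeffAt (mul Ψ Φ) n x = coeffAt one n x) :
    ∀ n : ℕ, 1 ≤ n → ∀ x : ℂ,
      coeffAt (smul (rightSym Ψ) Φ) (-(n : ℤ)) x =
        res (pow (mul (mul Φ T) Ψ) n) x := by
  have hord : Φ.1 + Ψ.1 = 0 := by rw [hΦord, hΨord, add_zero]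
  let Φunit : PdOˣ := ⟨Φ, Ψ, mul_eq_one_of_coeffAt hord hinv₁,
    mul_eq_one_of_coeffAt (by rwa [add_comm]) hinv₂⟩
  intro n _ x
  rw [coeffAt_smul_rightSym_eq_res hord, pow_eq_pow]
  exact congrArg (res · x) (Units.conj_pow Φunit T n).symm

/-- `Φ` the wave operator, `Ψ` its two-sided inverse. -/
theorem stmt14 (Φ Ψ : PdO)
    (hΦord : Φ.1 = 0) (hΦ0 : Φ.2 0 = fun _ => 1)
    (hΨord : Ψ.1 = 0) (hΨ0 : Ψ.2 0 = fun _ => 1)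
    (hinv₁ : ∀ (n : ℤ) (x : ℂ), coeffAt (mul Φ Ψ) n x = coeffAt one n x)
    (hinv₂ : ∀ (n : ℤ) (x : ℂ), coeffAt (mul Ψ Φ) n x = coeffAt one n x) :
    ∀ n : ℕ, 1 ≤ n → ∀ x : ℂ,
      coeffAt (smul (rightSym Ψ) Φ) (-(n : ℤ)) x =
        res (pow (mul (mul Φ T) Ψ) n) x :=
  stmt14_general Φ Ψ hΦord hΨord hinv₁ hinv₂
end
end
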